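/- The retraction $\mathbf{p}$ has image exactly the set of seminorms of the form $J(u)$: a multiplicative seminorm $x$ on $k[S]$ satisfies $\mathbf{p}(x) = x$ if and only if $x = J(u)$ for some monoid homomorphism $u : S \to \overline{\mathbb{R}}$. -/

import Mathlib

/-! With `u(s) = -log x(χ^s)` (and `-log 0 = ∞`) one has `p(x) = J(u)` for every `x`, so a fixed
point of `p` is `J(u)`, and `u` is a monoid homomorphism because `x` is multiplicative on
monomials. Conversely `J(u)(χ^s) = exp(-u(s))`, whence `p(J(u)) = J(u)`. -/

/-- `exp(-·) : ℝ̄ → ℝ≥0` with `exp(-∞) = 0`. -/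
noncomputable def expNeg : WithTop ℝ → NNReal
  | ⊤ => 0
  | (a : ℝ) => Real.toNNReal (Real.exp (-a))

/-- `J(u)(∑ aₛ χ^s) = max_s v(aₛ) · exp(-u(s))`. -/
noncomputable def Jmap {k S : Type*} [Field k] [AddCommMonoid S]
    (v : k → NNReal) (u : S → WithTop ℝ) (f : S →₀ k) : NNReal :=
  f.support.sup fun s => v (f s) * expNeg (u s)

/-- `p(x)(∑ aₛ χ^s) = max_s v(aₛ) · x(χ^s)`. -/
noncomputable def pRet {k S : Type*} [Field k] [AddCommMonoid S]
    (v : k → NNReal) (x : (S →₀ k) → NNReal) (f : S →₀ k) : NNReal :=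
  f.support.sup fun s => v (f s) * x (Finsupp.single s 1)

noncomputable def negLog (a : NNReal) : WithTop ℝ :=
  if a = 0 then ⊤ else ((-Real.log a : ℝ) : WithTop ℝ)

lemma expNeg_negLog (a : NNReal) : expNeg (negLog a) = a := by
  unfold negLog
  split_ifs with ha
  · simp [expNeg, ha]
  · simp only [expNeg, neg_neg]
    rw [Real.exp_log (NNReal.coe_pos.mpr (pos_iff_ne_zero.mpr ha)), Real.toNNReal_coe]

lemma negLog_one : negLog 1 = 0 := by
  simp [negLog]

lemma negLog_mul (a b : NNReal) : negLog (a * b) = negLog a + negLog b := by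
  by_cases ha : a = 0
  · simp [negLog, ha]
  by_cases hb : b = 0
  · simp [negLog, hb]
  simp only [negLog, mul_eq_zero, ha, hb, or_self, if_false, NNReal.coe_mul,
    Real.log_mul (NNReal.coe_ne_zero.mpr ha) (NNReal.coe_ne_zero.mpr hb)]
  norm_cast
  ring

section

variable {k S : Type*} [Field k] [AddCommMonoid S] (v : k → NNReal)

lemma pRet_eq_Jmap_negLog (x : (S →₀ k) → NNReal) :
    pRet v x = Jmap v fun s => negLog (x (Finsupp.single s 1)) := by
  funext f
  simp only [pRet, Jmap, expNeg_negLog]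

lemma Jmap_single_one (hv1 : v 1 = 1) (u : S → WithTop ℝ) (s : S) :
    Jmap v u (Finsupp.single s 1) = expNeg (u s) := by
  simp [Jmap, hv1]

lemma pRet_Jmap (hv1 : v 1 = 1) (u : S → WithTop ℝ) : pRet v (Jmap v u) = Jmap v u := by
  funext f
  simp only [pRet, Jmap_single_one v hv1]
  rfl

end

/-- A multiplicative seminorm `x` on `k[S]` is a fixed point of the retraction `p` if and only
if `x = J(u)` for some monoid homomorphism `u : S → ℝ̄`. -/
theorem pRet_fixed_iff_Jmap {k S : Type*} [Field k] [AddCommMonoid S]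
    (v : k → NNReal) (hv1 : v 1 = 1)
    (x : (S →₀ k) → NNReal)
    (hx1 : x (Finsupp.single 0 (1 : k)) = 1)
    (hxmul : ∀ s s' : S, x (Finsupp.single (s + s') (1 : k)) =
      x (Finsupp.single s 1) * x (Finsupp.single s' 1)) :
    pRet v x = x ↔
      ∃ u : S → WithTop ℝ,
        (u 0 = 0 ∧ ∀ s s' : S, u (s + s') = u s + u s') ∧ x = Jmap v u := by
  constructor
  · intro hfix
    refine ⟨fun s => negLog (x (Finsupp.single s 1)), ⟨?_, fun s s' => ?_⟩, ?_⟩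
    · simp only [hx1, negLog_one]
    · simp only [hxmul, negLog_mul]
    · exact hfix.symm.trans (pRet_eq_Jmap_negLog v x)
  · rintro ⟨u, -, rfl⟩
    exact pRet_Jmap v hv1 u
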